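/- Connection formula specialization: for t in (0, 1), ₂F₁(1, 4/3; 5/3; 1 − t) = −₂F₁(1, 4/3; 5/3; t) + (2/3) · (Γ(2/3)²/Γ(4/3)) · t^{−2/3} (1 − t)^{−2/3}. -/

import Mathlib

open Real

/-- Pochhammer symbol (rising factorial) for a real argument. -/
noncomputable def poch (q : ℝ) (n : ℕ) : ℝ := ∏ i ∈ Finset.range n, (q + i)

/-- Gauss hypergeometric function ₂F₁, defined by its power series. -/
noncomputable def hyp2F1 (a b c x : ℝ) : ℝ :=
  ∑' n : ℕ, poch a n * poch b n / (poch c n * n.factorial) * x ^ n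

/-- Generalized hypergeometric function ₃F₂, defined by its power series. -/
noncomputable def hyp3F2 (a₁ a₂ a₃ b₁ b₂ x : ℝ) : ℝ :=
  ∑' n : ℕ, poch a₁ n * poch a₂ n * poch a₃ n / (poch b₁ n * poch b₂ n * n.factorial) * x ^ n

/-!
For `|b| ≤ c` the coefficients `(b)ₙ / (c)ₙ` of `F = ₂F₁(1, b; c; ·)` are bounded by `1`, and the
recursion `(c + n) aₙ₊₁ = (b + n) aₙ` says that `x (1 - x) F' + (c - 1 - b x) F = c - 1`. With the
integrating factor `x ^ (c - 1) (1 - x) ^ (b - c + 1)` this integrates to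
`x ^ (c - 1) (1 - x) ^ (b - c + 1) F x = (c - 1) ∫₀ˣ u ^ (c - 2) (1 - u) ^ (b - c) du`.
For `b = 2s`, `c = s + 1` the integrand `u ^ (s - 1) (1 - u) ^ (s - 1)` is symmetric under
`u ↦ 1 - u`, so adding the identities at `t` and `1 - t` gives the full Beta integral
`B(s, s) = Γ(s)² / Γ(2s)`; the theorem is the case `s = 2/3`.
-/

open MeasureTheory intervalIntegral

theorem poch_succ (q : ℝ) (n : ℕ) : poch q (n + 1) = poch q n * (q + n) :=
  Finset.prod_range_succ _ _

theorem poch_one (n : ℕ) : poch 1 n = n.factorial := by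
  induction n with
  | zero => simp [poch]
  | succ n ih => rw [poch_succ, ih, Nat.factorial_succ]; push_cast; ring

noncomputable def hyp2F1OneCoeff (b c : ℝ) (n : ℕ) : ℝ := poch b n / poch c n

theorem hyp2F1_one_left (b c x : ℝ) :
    hyp2F1 1 b c x = ∑' n : ℕ, hyp2F1OneCoeff b c n * x ^ n := by
  refine tsum_congr fun n => ?_
  rw [poch_one, hyp2F1OneCoeff, mul_comm (poch c n),
    mul_div_mul_left _ _ (Nat.cast_ne_zero.2 n.factorial_ne_zero)]

theorem hyp2F1OneCoeff_zero (b c : ℝ) : hyp2F1OneCoeff b c 0 = 1 := by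
  simp [hyp2F1OneCoeff, poch]

theorem hyp2F1OneCoeff_succ (b c : ℝ) (n : ℕ) :
    hyp2F1OneCoeff b c (n + 1) = hyp2F1OneCoeff b c n * ((b + n) / (c + n)) := by
  rw [hyp2F1OneCoeff, hyp2F1OneCoeff, poch_succ, poch_succ, mul_div_mul_comm]

theorem abs_hyp2F1OneCoeff_le_one {b c : ℝ} (hbc : |b| ≤ c) (n : ℕ) :
    |hyp2F1OneCoeff b c n| ≤ 1 := by
  induction n with
  | zero => simp [hyp2F1OneCoeff_zero]
  | succ n ih =>
    have hratio : |(b + n) / (c + n)| ≤ 1 := by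
      rw [abs_div]
      refine div_le_one_of_le₀ ?_ (abs_nonneg _)
      calc |b + n| ≤ |b| + n := by simpa using abs_add_le b n
        _ ≤ c + n := by linarith
        _ ≤ |c + n| := le_abs_self _
    rw [hyp2F1OneCoeff_succ, abs_mul]
    exact mul_le_one₀ ih (abs_nonneg _) hratio

section PowerSeries

variable {a : ℕ → ℝ} {C x : ℝ}

theorem summable_natCast_pow_mul_mul_pow (k : ℕ) (ha : ∀ n, |a n| ≤ C) (hx : |x| < 1) :
    Summable fun n : ℕ => (n : ℝ) ^ k * a n * x ^ n := by
  refine .of_norm_bounded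
    ((summable_pow_mul_geometric_of_norm_lt_one k (r := |x|) (by simpa using hx)).mul_left C)
    fun n => ?_
  rw [Real.norm_eq_abs, abs_mul, abs_mul, abs_pow, abs_pow, Nat.abs_cast]
  have hC : |a n| * |x| ^ n ≤ C * |x| ^ n := by gcongr; exact ha n
  nlinarith [pow_nonneg (Nat.cast_nonneg (α := ℝ) n) k]

theorem hasDerivAt_tsum_mul_pow (ha : ∀ n, |a n| ≤ C) (hx : |x| < 1) :
    HasDerivAt (fun y => ∑' n : ℕ, a n * y ^ n) (∑' n : ℕ, a n * (n * x ^ (n - 1))) x := by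
  obtain ⟨r, hxr, hr1⟩ := exists_between hx
  have hr : |r| < 1 := by rwa [abs_of_nonneg ((abs_nonneg x).trans hxr.le)]
  have hu : Summable fun n : ℕ => C * (n * r ^ (n - 1)) := by
    refine .mul_left C ((summable_nat_add_iff 1).mp ?_)
    have := (summable_natCast_pow_mul_mul_pow (a := 1) 1 (fun _ => abs_one.le) hr).add
      (summable_natCast_pow_mul_mul_pow (a := 1) 0 (fun _ => abs_one.le) hr)
    simpa [add_mul] using this
  have hmem : ∀ {y : ℝ}, |y| < r → y ∈ Set.Ioo (-r) r := fun hy => abs_lt.1 hy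
  refine hasDerivAt_tsum_of_isPreconnected hu isOpen_Ioo isPreconnected_Ioo
    (fun n y _ => (hasDerivAt_pow n y).const_mul (a n)) (fun n y hy => ?_) (hmem hxr)
    (by simpa using summable_natCast_pow_mul_mul_pow 0 ha (hxr.trans hr1)) (hmem hxr)
  have hyr : |y| ≤ r := abs_le.2 ⟨hy.1.le, hy.2.le⟩
  rw [Real.norm_eq_abs, abs_mul, abs_mul, abs_pow, Nat.abs_cast]
  gcongr
  · exact (abs_nonneg _).trans (ha 0)
  · exact ha n

end PowerSeries

section FirstOrderODE

variable {b c x : ℝ}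

theorem hasDerivAt_hyp2F1_one (hbc : |b| ≤ c) (hx : |x| < 1) :
    HasDerivAt (hyp2F1 1 b c) (∑' n : ℕ, hyp2F1OneCoeff b c n * (n * x ^ (n - 1))) x := by
  rw [show hyp2F1 1 b c = _ from funext (hyp2F1_one_left b c)]
  exact hasDerivAt_tsum_mul_pow (abs_hyp2F1OneCoeff_le_one hbc) hx

theorem hyp2F1_one_ode (hbc : |b| ≤ c) (hc : 0 < c) (hx : |x| < 1) :
    x * (1 - x) * deriv (hyp2F1 1 b c) x + (c - 1 - b * x) * hyp2F1 1 b c x = c - 1 := by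
  set a := hyp2F1OneCoeff b c
  have ha : ∀ n, |a n| ≤ 1 := abs_hyp2F1OneCoeff_le_one hbc
  have hS : Summable fun n : ℕ => a n * x ^ n := by
    simpa using summable_natCast_pow_mul_mul_pow 0 ha hx
  have hT : Summable fun n : ℕ => (n : ℝ) * a n * x ^ n := by
    simpa using summable_natCast_pow_mul_mul_pow 1 ha hx
  set s : ℕ → ℝ := fun n => (n + c - 1) * a n * x ^ n
  have hs : Summable s := (hT.add (hS.mul_left (c - 1))).congr fun n => by simp only [s]; ring
  have hxD : x * deriv (hyp2F1 1 b c) x = ∑' n : ℕ, n * a n * x ^ n := by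
    rw [(hasDerivAt_hyp2F1_one hbc hx).deriv, ← tsum_mul_left]
    refine tsum_congr fun n => ?_
    cases n with
    | zero => simp
    | succ n => rw [Nat.add_sub_cancel, pow_succ]; ring
  have hF : hyp2F1 1 b c x = ∑' n : ℕ, a n * x ^ n := hyp2F1_one_left b c x
  have hshift : ∀ n : ℕ, x * ((n + b) * a n * x ^ n) = s (n + 1) := fun n => by
    have hcn : c + n ≠ 0 := by positivity
    simp only [s, a, hyp2F1OneCoeff_succ]
    push_cast
    field_simp
    ring
  have hsum : x * deriv (hyp2F1 1 b c) x + (c - 1) * hyp2F1 1 b c x = ∑' n, s n := by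
    rw [hxD, hF, ← tsum_mul_left, ← hT.tsum_add (hS.mul_left _)]
    exact tsum_congr fun n => by simp only [s]; ring
  have hsum_succ : x * (x * deriv (hyp2F1 1 b c) x + b * hyp2F1 1 b c x) = ∑' n, s (n + 1) := by
    rw [hxD, hF, ← tsum_mul_left, ← hT.tsum_add (hS.mul_left _), ← tsum_mul_left]
    exact tsum_congr fun n => by rw [← hshift]; ring
  calc x * (1 - x) * deriv (hyp2F1 1 b c) x + (c - 1 - b * x) * hyp2F1 1 b c x
      = (x * deriv (hyp2F1 1 b c) x + (c - 1) * hyp2F1 1 b c x)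
        - x * (x * deriv (hyp2F1 1 b c) x + b * hyp2F1 1 b c x) := by ring
    _ = s 0 := by rw [hsum, hsum_succ, hs.tsum_eq_zero_add]; ring
    _ = c - 1 := by simp [s, a, hyp2F1OneCoeff_zero]

end FirstOrderODE

section EulerIntegral

theorem intervalIntegrable_rpow_mul_one_sub_rpow {p : ℝ} (hp : -1 < p) (q : ℝ) {x : ℝ}
    (hx : x < 1) : IntervalIntegrable (fun u : ℝ => u ^ p * (1 - u) ^ q) volume 0 x := by
  refine (intervalIntegrable_rpow' hp).mul_continuousOn
    ((continuousOn_const.sub continuousOn_id).rpow_const fun u hu => Or.inl ?_)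
  have hu1 : u ≤ max 0 x := hu.2
  exact sub_ne_zero.2 (by linarith [max_lt zero_lt_one hx] : u < 1).ne'

variable {b c x : ℝ}

theorem hasDerivAt_rpow_mul_one_sub_rpow_mul_hyp2F1_one (hbc : |b| ≤ c) (hc : 0 < c)
    (hx0 : 0 < x) (hx1 : x < 1) :
    HasDerivAt (fun u => u ^ (c - 1) * (1 - u) ^ (b - c + 1) * hyp2F1 1 b c u)
      ((c - 1) * (x ^ (c - 2) * (1 - x) ^ (b - c))) x := by
  have h1x : 1 - x ≠ 0 := by linarith
  have hpow : HasDerivAt (fun u => u ^ (c - 1)) ((c - 1) * x ^ (c - 1 - 1)) x :=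
    hasDerivAt_rpow_const (Or.inl hx0.ne')
  have hpow' : HasDerivAt (fun u => (1 - u) ^ (b - c + 1))
      (-1 * (b - c + 1) * (1 - x) ^ (b - c + 1 - 1)) x :=
    ((hasDerivAt_id x).const_sub 1).rpow_const (Or.inl h1x)
  have hF := (hasDerivAt_hyp2F1_one hbc (abs_lt.2 ⟨by linarith, hx1⟩)).differentiableAt.hasDerivAt
  refine ((hpow.mul hpow').mul hF).congr_deriv ?_
  have hode := hyp2F1_one_ode hbc hc (abs_lt.2 ⟨by linarith, hx1⟩)
  simp only [Pi.mul_apply]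
  rw [show c - 1 - 1 = c - 2 by ring, show b - c + 1 - 1 = b - c by ring,
    show c - 1 = c - 2 + 1 by ring,
    rpow_add_one hx0.ne', rpow_add_one h1x]
  linear_combination x ^ (c - 2) * (1 - x) ^ (b - c) * hode

theorem rpow_mul_one_sub_rpow_mul_hyp2F1_one (hbc : |b| ≤ c) (hc : 1 < c) (hx0 : 0 ≤ x)
    (hx1 : x < 1) :
    x ^ (c - 1) * (1 - x) ^ (b - c + 1) * hyp2F1 1 b c x =
      (c - 1) * ∫ u in (0 : ℝ)..x, u ^ (c - 2) * (1 - u) ^ (b - c) := by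
  have hcont : ContinuousOn (fun u => u ^ (c - 1) * (1 - u) ^ (b - c + 1) * hyp2F1 1 b c u)
      (Set.Icc 0 x) := by
    refine ((continuousOn_id.rpow_const fun _ _ => Or.inr (by linarith)).mul
      ((continuousOn_const.sub continuousOn_id).rpow_const fun u hu => Or.inl ?_)).mul
      fun u hu => ?_
    · exact sub_ne_zero.2 (by linarith [hu.2] : u < 1).ne'
    · exact (hasDerivAt_hyp2F1_one hbc (abs_lt.2 ⟨by linarith [hu.1], by linarith [hu.2]⟩))
        |>.continuousAt.continuousWithinAt
  rw [← intervalIntegral.integral_const_mul, integral_eq_sub_of_hasDerivAt_of_le hx0 hcont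
    (fun u hu => hasDerivAt_rpow_mul_one_sub_rpow_mul_hyp2F1_one hbc (by linarith) hu.1
      (hu.2.trans hx1))
    ((intervalIntegrable_rpow_mul_one_sub_rpow (by linarith) _ hx1).const_mul _)]
  simp [zero_rpow (sub_ne_zero.2 hc.ne')]

end EulerIntegral

section SymmetricCase

theorem integral_rpow_mul_one_sub_rpow_eq_Gamma {p q : ℝ} (hp : 0 < p) (hq : 0 < q) :
    ∫ u in (0 : ℝ)..1, u ^ (p - 1) * (1 - u) ^ (q - 1) = Gamma p * Gamma q / Gamma (p + q) := by
  have hcomplex : ((∫ u in (0 : ℝ)..1, u ^ (p - 1) * (1 - u) ^ (q - 1) : ℝ) : ℂ) =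
      Complex.betaIntegral p q := by
    rw [Complex.betaIntegral, ← intervalIntegral.integral_ofReal]
    refine integral_congr fun u hu => ?_
    rw [Set.uIcc_of_le zero_le_one] at hu
    rw [Complex.ofReal_mul, Complex.ofReal_cpow hu.1, Complex.ofReal_cpow (sub_nonneg.2 hu.2)]
    push_cast
    rfl
  rw [Complex.betaIntegral_eq_Gamma_mul_div _ _ (by simpa) (by simpa), ← Complex.ofReal_add,
    Complex.Gamma_ofReal, Complex.Gamma_ofReal, Complex.Gamma_ofReal] at hcomplex
  exact_mod_cast hcomplex

theorem integral_add_integral_one_sub_of_symm {f : ℝ → ℝ} (hf : ∀ u, f (1 - u) = f u) {t : ℝ}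
    (ht : IntervalIntegrable f volume 0 t) (ht' : IntervalIntegrable f volume 0 (1 - t)) :
    (∫ u in (0 : ℝ)..t, f u) + ∫ u in (0 : ℝ)..(1 - t), f u = ∫ u in (0 : ℝ)..1, f u := by
  have hreflect : ∫ u in (0 : ℝ)..(1 - t), f u = ∫ u in t..1, f u := by
    simpa [hf] using integral_comp_sub_left f 1 (a := 0) (b := 1 - t)
  have ht1 : IntervalIntegrable f volume t 1 := by
    simpa [hf] using (ht'.comp_sub_left 1).symm
  rw [hreflect, integral_add_adjacent_intervals ht ht1]

theorem rpow_mul_rpow_mul_hyp2F1_one_add_hyp2F1_one_one_sub {s t : ℝ} (hs0 : 0 < s)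
    (hs1 : s ≤ 1) (ht0 : 0 < t) (ht1 : t < 1) :
    t ^ s * (1 - t) ^ s * (hyp2F1 1 (2 * s) (s + 1) t + hyp2F1 1 (2 * s) (s + 1) (1 - t)) =
      s * (Gamma s ^ 2 / Gamma (2 * s)) := by
  set w : ℝ → ℝ := fun u => u ^ (s - 1) * (1 - u) ^ (s - 1)
  have hw : ∀ u, w (1 - u) = w u := fun u => by simp only [w, sub_sub_cancel]; ring
  have hbc : |2 * s| ≤ s + 1 := by rw [abs_of_pos (by positivity)]; linarith
  have heuler : ∀ x, 0 ≤ x → x < 1 →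
      x ^ s * (1 - x) ^ s * hyp2F1 1 (2 * s) (s + 1) x = s * ∫ u in (0 : ℝ)..x, w u := by
    intro x hx0 hx1
    have h := rpow_mul_one_sub_rpow_mul_hyp2F1_one hbc (by linarith) hx0 hx1
    rwa [show s + 1 - 1 = s by ring, show 2 * s - (s + 1) + 1 = s by ring,
      show s + 1 - 2 = s - 1 by ring, show 2 * s - (s + 1) = s - 1 by ring] at h
  have hint : ∀ x < 1, IntervalIntegrable w volume 0 x := fun x hx =>
    intervalIntegrable_rpow_mul_one_sub_rpow (by linarith) _ hx
  calc t ^ s * (1 - t) ^ s * (hyp2F1 1 (2 * s) (s + 1) t + hyp2F1 1 (2 * s) (s + 1) (1 - t))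
      = t ^ s * (1 - t) ^ s * hyp2F1 1 (2 * s) (s + 1) t
        + (1 - t) ^ s * (1 - (1 - t)) ^ s * hyp2F1 1 (2 * s) (s + 1) (1 - t) := by
        rw [sub_sub_cancel]; ring
    _ = s * ∫ u in (0 : ℝ)..1, w u := by
        rw [heuler t ht0.le ht1, heuler (1 - t) (by linarith) (by linarith), ← mul_add,
          integral_add_integral_one_sub_of_symm hw (hint t ht1) (hint (1 - t) (by linarith))]
    _ = s * (Gamma s ^ 2 / Gamma (2 * s)) := by
        rw [integral_rpow_mul_one_sub_rpow_eq_Gamma hs0 hs0, two_mul, sq]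

end SymmetricCase

theorem connection_specialization (t : ℝ) (ht : t ∈ Set.Ioo (0 : ℝ) 1) :
    hyp2F1 1 (4/3) (5/3) (1 - t) =
      -hyp2F1 1 (4/3) (5/3) t +
        (2/3) * (Real.Gamma (2/3) ^ 2 / Real.Gamma (4/3)) *
          t ^ (-(2:ℝ)/3) * (1 - t) ^ (-(2:ℝ)/3) := by
  obtain ⟨ht0, ht1⟩ := ht
  have h := rpow_mul_rpow_mul_hyp2F1_one_add_hyp2F1_one_one_sub (s := 2 / 3)
    (by norm_num) (by norm_num) ht0 ht1
  norm_num at h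
  rw [neg_div, rpow_neg ht0.le, rpow_neg (sub_pos.2 ht1).le]
  field_simp at h ⊢
  linear_combination h
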